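/- arXiv:1912.08805 — 3 statements merged into one kernel-verified Lean document; each statement's English description precedes it below -/
import Mathlib

section
/- Let M be an n×n complex matrix that is diagonalizable, say M = V D V⁻¹ with V invertible and D diagonal, and let z₀ ∈ ℂ, r > 0, and 1 ≤ j ≤ n. If at least j of the diagonal entries of D (counted with multiplicity) lie in the open disk D(z₀, r) = { z : |z − z₀| < r }, then σ_{n−j+1}(z₀·I − M) ≤ r·‖V‖·‖V⁻¹‖. -/
/-!
Let `T` be a set of `j` indices with `d i` in the disk and `P_T` the diagonal coordinate
projection onto `T`. Then `Q = V P_T V⁻¹` is an idempotent of rank `j`, so on its range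
`z₀ I - M` agrees with `(z₀ I - M) Q = V diag((z₀ - d i) 1_T(i)) V⁻¹`, whose spectral norm is at
most `r ‖V‖ ‖V⁻¹‖`. Taking `S = range Q` in the Courant–Fischer characterization gives the bound.
-/

open Matrix

/-- The Euclidean norm of a vector in `ℂⁿ`. -/
noncomputable def vecEnorm {n : ℕ} (v : Fin n → ℂ) : ℝ :=
  Real.sqrt (∑ i, ‖v i‖ ^ 2)

/-- The spectral norm (`ℓ² → ℓ²` operator norm) of a complex matrix:
the supremum of `‖Av‖` over Euclidean-unit vectors `v`. -/
noncomputable def specNorm {m n : ℕ} (A : Matrix (Fin m) (Fin n) ℂ) : ℝ :=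
  sSup {s | ∃ v : Fin n → ℂ, vecEnorm v = 1 ∧ s = vecEnorm (A.mulVec v)}

/-- The `j`-th smallest singular value `σ_{n−j+1}(B)` of an `n×n` complex matrix `B`, via the
Courant–Fischer characterization: the infimum over `j`-dimensional subspaces `S` of `ℂⁿ` of
`max_{x ∈ S, ‖x‖ = 1} ‖Bx‖`. -/
noncomputable def sval {n : ℕ} (j : ℕ) (B : Matrix (Fin n) (Fin n) ℂ) : ℝ :=
  sInf {t | ∃ S : Submodule ℂ (Fin n → ℂ), Module.finrank ℂ S = j ∧
    t = sSup {s | ∃ v ∈ S, vecEnorm v = 1 ∧ s = vecEnorm (B.mulVec v)}}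

open scoped Matrix.Norms.L2Operator

lemma vecEnorm_eq_norm_toLp {n : ℕ} (v : Fin n → ℂ) :
    vecEnorm v = ‖(WithLp.toLp 2 v : EuclideanSpace ℂ (Fin n))‖ := by
  simp [vecEnorm, EuclideanSpace.norm_eq]

lemma vecEnorm_mulVec_le {m n : ℕ} (A : Matrix (Fin m) (Fin n) ℂ) (v : Fin n → ℂ) :
    vecEnorm (A *ᵥ v) ≤ ‖A‖ * vecEnorm v := by
  simpa [vecEnorm_eq_norm_toLp] using A.l2_opNorm_mulVec (WithLp.toLp 2 v)

lemma specNorm_eq_l2_opNorm {m n : ℕ} (A : Matrix (Fin m) (Fin n) ℂ) : specNorm A = ‖A‖ := by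
  rw [l2_opNorm_def, ← ContinuousLinearMap.sSup_sphere_eq_norm, specNorm]
  congr 1
  ext s
  simp only [Set.mem_ofPred_eq, Set.mem_image, mem_sphere_zero_iff_norm, vecEnorm_eq_norm_toLp]
  constructor
  · rintro ⟨v, hv, rfl⟩
    exact ⟨WithLp.toLp 2 v, hv, rfl⟩
  · rintro ⟨x, hx, rfl⟩
    exact ⟨x.ofLp, hx, rfl⟩

lemma sval_le_norm_mul_of_isIdempotentElem {n j : ℕ} (B Q : Matrix (Fin n) (Fin n) ℂ)
    (hQ : IsIdempotentElem Q) (hQj : Q.rank = j) : sval j B ≤ ‖B * Q‖ := by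
  have hbdd : BddBelow {t | ∃ S : Submodule ℂ (Fin n → ℂ), Module.finrank ℂ S = j ∧
      t = sSup {s | ∃ v ∈ S, vecEnorm v = 1 ∧ s = vecEnorm (B *ᵥ v)}} := by
    refine ⟨0, ?_⟩
    rintro t ⟨S, -, rfl⟩
    exact Real.sSup_nonneg (by rintro s ⟨v, -, -, rfl⟩; exact Real.sqrt_nonneg _)
  refine (csInf_le hbdd ⟨LinearMap.range Q.mulVecLin, hQj, rfl⟩).trans <|
    Real.sSup_le ?_ (norm_nonneg _)
  rintro s ⟨-, ⟨u, rfl⟩, hv, rfl⟩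
  rw [mulVecLin_apply] at hv
  -- `Q` fixes its range, so `B` and `B * Q` agree there.
  have hQv : Q *ᵥ (Q *ᵥ u) = Q *ᵥ u := by rw [mulVec_mulVec, hQ.eq]
  calc vecEnorm (B *ᵥ (Q *ᵥ u)) = vecEnorm ((B * Q) *ᵥ (Q *ᵥ u)) := by
        rw [← mulVec_mulVec, hQv]
    _ ≤ ‖B * Q‖ * vecEnorm (Q *ᵥ u) := vecEnorm_mulVec_le _ _
    _ = ‖B * Q‖ := by rw [hv, mul_one]

section Conjugation

variable {R m : Type*} [CommRing R] [Fintype m] [DecidableEq m] {V : Matrix m m R}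

lemma conj_mul_conj (hV : IsUnit V) (A B : Matrix m m R) :
    V * A * V⁻¹ * (V * B * V⁻¹) = V * (A * B) * V⁻¹ := by
  have hVV : V⁻¹ * V = 1 := nonsing_inv_mul V ((isUnit_iff_isUnit_det V).mp hV)
  calc V * A * V⁻¹ * (V * B * V⁻¹) = V * (A * (V⁻¹ * V) * B) * V⁻¹ := by noncomm_ring
    _ = V * (A * B) * V⁻¹ := by rw [hVV, mul_one]

lemma smul_one_sub_conj (hV : IsUnit V) (z : R) (A : Matrix m m R) :
    z • 1 - V * A * V⁻¹ = V * (z • 1 - A) * V⁻¹ := by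
  have hVV : V * V⁻¹ = 1 := mul_nonsing_inv V ((isUnit_iff_isUnit_det V).mp hV)
  rw [mul_sub, sub_mul, Matrix.mul_smul, mul_one, smul_mul_assoc, hVV]

lemma isIdempotentElem_conj (hV : IsUnit V) {P : Matrix m m R} (hP : IsIdempotentElem P) :
    IsIdempotentElem (V * P * V⁻¹) := by
  rw [IsIdempotentElem, conj_mul_conj hV, hP.eq]

lemma rank_conj (hV : IsUnit V) (P : Matrix m m R) : (V * P * V⁻¹).rank = P.rank := by
  have hdet := (isUnit_iff_isUnit_det V).mp hV
  rw [rank_mul_eq_left_of_isUnit_det _ _ (isUnit_nonsing_inv_det V hdet),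
    rank_mul_eq_right_of_isUnit_det _ _ hdet]

end Conjugation

section Indicator

variable {K m : Type*} [Field K] [Fintype m] [DecidableEq m]

lemma isIdempotentElem_diagonal_indicator (T : Finset m) :
    IsIdempotentElem (diagonal fun i => if i ∈ T then (1 : K) else 0) := by
  rw [IsIdempotentElem, diagonal_mul_diagonal]
  congr 1
  ext i
  split_ifs <;> simp

lemma rank_diagonal_indicator (T : Finset m) :
    (diagonal fun i => if i ∈ T then (1 : K) else 0).rank = T.card := by
  classical
  rw [rank_diagonal, Fintype.card_subtype]
  simp

end Indicator

theorem sval_le_of_eigenvalues_in_disk_general {n : ℕ} (M V : Matrix (Fin n) (Fin n) ℂ)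
    (d : Fin n → ℂ) (hV : IsUnit V) (hM : M = V * Matrix.diagonal d * V⁻¹)
    (z₀ : ℂ) (r : ℝ) (hr : 0 < r) (j : ℕ)
    (hcount : j ≤ (Finset.univ.filter fun i => ‖d i - z₀‖ < r).card) :
    sval j (z₀ • (1 : Matrix (Fin n) (Fin n) ℂ) - M) ≤ r * (specNorm V * specNorm V⁻¹) := by
  obtain ⟨T, hT, rfl⟩ := Finset.exists_subset_card_eq hcount
  set P : Matrix (Fin n) (Fin n) ℂ := diagonal fun i => if i ∈ T then 1 else 0
  set e : Fin n → ℂ := fun i => if i ∈ T then z₀ - d i else 0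
  have hBQ : (z₀ • 1 - M) * (V * P * V⁻¹) = V * diagonal e * V⁻¹ := by
    rw [hM, smul_one_sub_conj hV, conj_mul_conj hV, smul_one_eq_diagonal, diagonal_sub,
      diagonal_mul_diagonal]
    simp [e, mul_ite]
  have he : ‖e‖ ≤ r := by
    refine (pi_norm_le_iff_of_nonneg hr.le).mpr fun i => ?_
    by_cases hi : i ∈ T
    · simpa [e, hi, norm_sub_rev] using (Finset.mem_filter.mp (hT hi)).2.le
    · simpa [e, hi] using hr.le
  calc sval T.card (z₀ • 1 - M) ≤ ‖(z₀ • 1 - M) * (V * P * V⁻¹)‖ :=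
        sval_le_norm_mul_of_isIdempotentElem _ _
          (isIdempotentElem_conj hV (isIdempotentElem_diagonal_indicator T))
          (by rw [rank_conj hV, rank_diagonal_indicator])
    _ ≤ ‖V‖ * ‖diagonal e‖ * ‖V⁻¹‖ := by
        rw [hBQ]
        exact (l2_opNorm_mul _ _).trans (by gcongr; exact l2_opNorm_mul _ _)
    _ ≤ ‖V‖ * r * ‖V⁻¹‖ := by rw [l2_opNorm_diagonal]; gcongr
    _ = r * (specNorm V * specNorm V⁻¹) := by
        rw [specNorm_eq_l2_opNorm, specNorm_eq_l2_opNorm]; ring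

/-- If `M = V D V⁻¹` is diagonalizable and at least `j` of the diagonal entries of `D`
(counted with multiplicity) lie in the open disk `D(z₀, r)`, then
`σ_{n−j+1}(z₀ I − M) ≤ r ‖V‖ ‖V⁻¹‖`. -/
theorem sval_le_of_eigenvalues_in_disk {n : ℕ} (M V : Matrix (Fin n) (Fin n) ℂ)
    (d : Fin n → ℂ) (hV : IsUnit V) (hM : M = V * Matrix.diagonal d * V⁻¹)
    (z₀ : ℂ) (r : ℝ) (hr : 0 < r) (j : ℕ) (hj : 1 ≤ j) (hjn : j ≤ n)
    (hcount : j ≤ (Finset.univ.filter fun i => ‖d i - z₀‖ < r).card) :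
    sval j (z₀ • (1 : Matrix (Fin n) (Fin n) ℂ) - M) ≤ r * (specNorm V * specNorm V⁻¹) :=
  sval_le_of_eigenvalues_in_disk_general M V d hV hM z₀ r hr j hcount
end

section
/- (Separation of Apollonian circles.) Let α, β ∈ (0,1) and let x, y ∈ ℂ be points whose Möbius ratio m(z) = (1−z)/(1+z) satisfies |m(x)| ∈ {α, 1/α} and |m(y)| ∈ {β, 1/β} (that is, x lies on the boundary of C^±_α and y on the boundary of C^±_β). Then |x − y| ≥ |α − β|/2. -/
/-- The Möbius transformation `m(z) = (1 - z)/(1 + z)`. -/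
noncomputable def mobius (z : ℂ) : ℂ := (1 - z) / (1 + z)

/-!
Since `m(-z) = m(z)⁻¹` and `|(-x) - (-y)| = |x - y|`, up to negating both points and swapping
them there are two cases.

If `|m x| = α` and `|m y| = β`, both points satisfy `|1 + z| ≥ 1`, because
`2 ≤ |1 - z| + |1 + z| = (1 + |m z|) |1 + z|`. With `m x - m y = 2 (y - x) / ((1 + x)(1 + y))`
this makes `m` 2-Lipschitz on such points, so `|α - β| ≤ |m x - m y| ≤ 2 |x - y|`.

If `|m x| = α` and `|m (-y)| = β`, then `x` and `-y` lie in half-planes far to the right: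
as `m` is an involution and `Re (m w) = (1 - |w|²) / |1 + w|²`, `|m z| ≤ α` forces
`Re z ≥ (1 - α) / (1 + α) ≥ (1 - α) / 2`. Hence
`|x - y| ≥ Re (x - y) ≥ (1 - α) / 2 + (1 - β) / 2 ≥ |α - β| / 2`.
-/

theorem mobius_neg (z : ℂ) : mobius (-z) = (mobius z)⁻¹ := by
  rw [mobius, mobius, inv_div, sub_neg_eq_add, ← sub_eq_add_neg]

theorem norm_mobius_neg (z : ℂ) : ‖mobius (-z)‖ = ‖mobius z‖⁻¹ := by
  rw [mobius_neg, norm_inv]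

theorem one_add_ne_zero_of_mobius_ne_zero {z : ℂ} (h : mobius z ≠ 0) : 1 + z ≠ 0 := by
  contrapose! h
  rw [mobius, h, div_zero]

theorem one_add_mobius {z : ℂ} (hz : 1 + z ≠ 0) : 1 + mobius z = 2 / (1 + z) := by
  rw [mobius]
  field_simp
  ring

theorem mobius_mobius {z : ℂ} (hz : 1 + z ≠ 0) : mobius (mobius z) = z := by
  rw [mobius, one_add_mobius hz, mobius]
  field_simp
  ring

theorem mobius_sub_mobius {z w : ℂ} (hz : 1 + z ≠ 0) (hw : 1 + w ≠ 0) :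
    mobius z - mobius w = 2 * (w - z) / ((1 + z) * (1 + w)) := by
  rw [mobius, mobius]
  field_simp
  ring

theorem re_mobius (w : ℂ) : (mobius w).re = (1 - ‖w‖ ^ 2) / ‖1 + w‖ ^ 2 := by
  rw [mobius, Complex.div_re, Complex.sq_norm, Complex.sq_norm, Complex.normSq_apply,
    Complex.normSq_apply, ← add_div]
  congr 1
  simp only [Complex.sub_re, Complex.sub_im, Complex.add_re, Complex.add_im, Complex.one_re,
    Complex.one_im]
  ring

theorem one_le_norm_one_add_of_norm_mobius_le_one {z : ℂ} (hz : 1 + z ≠ 0)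
    (h : ‖mobius z‖ ≤ 1) : 1 ≤ ‖1 + z‖ := by
  have hsub : ‖1 - z‖ = ‖mobius z‖ * ‖1 + z‖ := by
    rw [mobius, norm_div, div_mul_cancel₀ _ (norm_ne_zero_iff.mpr hz)]
  have htri : (2 : ℝ) ≤ ‖1 - z‖ + ‖1 + z‖ := by
    simpa [show (1 - z) + (1 + z) = 2 by ring] using norm_add_le (1 - z) (1 + z)
  nlinarith [norm_nonneg (1 + z)]

theorem norm_mobius_sub_mobius_le {z w : ℂ} (hz : 1 + z ≠ 0) (hw : 1 + w ≠ 0)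
    (hmz : ‖mobius z‖ ≤ 1) (hmw : ‖mobius w‖ ≤ 1) :
    ‖mobius z - mobius w‖ ≤ 2 * ‖z - w‖ := by
  have hprod : 1 ≤ ‖1 + z‖ * ‖1 + w‖ :=
    one_le_mul_of_one_le_of_one_le (one_le_norm_one_add_of_norm_mobius_le_one hz hmz)
      (one_le_norm_one_add_of_norm_mobius_le_one hw hmw)
  rw [mobius_sub_mobius hz hw, norm_div, norm_mul, norm_mul, Complex.norm_two, norm_sub_rev w z]
  exact div_le_self (by positivity) hprod

theorem div_le_re_of_norm_mobius_le {z : ℂ} {α : ℝ} (hz : 1 + z ≠ 0) (hα : α ≤ 1)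
    (h : ‖mobius z‖ ≤ α) : (1 - α) / (1 + α) ≤ z.re := by
  set t := ‖mobius z‖
  have ht0 : 0 ≤ t := norm_nonneg _
  have hpos : 0 < ‖1 + mobius z‖ := by
    rw [one_add_mobius hz]
    exact norm_pos_iff.mpr (div_ne_zero two_ne_zero hz)
  have hle : ‖1 + mobius z‖ ≤ 1 + t := (norm_add_le _ _).trans_eq (by rw [norm_one])
  rw [← mobius_mobius hz, re_mobius]
  calc (1 - α) / (1 + α) ≤ (1 - t) / (1 + t) := by
        rw [div_le_div_iff₀ (by linarith) (by linarith)]; nlinarith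
    _ = (1 - t ^ 2) / (1 + t) ^ 2 := by field_simp; ring
    _ ≤ (1 - t ^ 2) / ‖1 + mobius z‖ ^ 2 :=
        div_le_div_of_nonneg_left (by nlinarith) (by positivity) (by gcongr)

theorem apollonius_separation_same_side {α β : ℝ} {x y : ℂ} (hα0 : 0 < α) (hα1 : α ≤ 1)
    (hβ0 : 0 < β) (hβ1 : β ≤ 1) (hx : ‖mobius x‖ = α) (hy : ‖mobius y‖ = β) :
    |α - β| / 2 ≤ ‖x - y‖ := by
  have hx0 : 1 + x ≠ 0 := one_add_ne_zero_of_mobius_ne_zero (norm_pos_iff.mp (hx ▸ hα0))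
  have hy0 : 1 + y ≠ 0 := one_add_ne_zero_of_mobius_ne_zero (norm_pos_iff.mp (hy ▸ hβ0))
  have hlip := norm_mobius_sub_mobius_le hx0 hy0 (hx ▸ hα1) (hy ▸ hβ1)
  have hnorm : |α - β| ≤ ‖mobius x - mobius y‖ := hx ▸ hy ▸ abs_norm_sub_norm_le _ _
  linarith

theorem apollonius_separation_opposite_sides {α β : ℝ} {x y : ℂ} (hα0 : 0 < α)
    (hα1 : α ≤ 1) (hβ0 : 0 < β) (hβ1 : β ≤ 1) (hx : ‖mobius x‖ = α)
    (hy : ‖mobius (-y)‖ = β) : |α - β| / 2 ≤ ‖x - y‖ := by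
  have hx0 : 1 + x ≠ 0 := one_add_ne_zero_of_mobius_ne_zero (norm_pos_iff.mp (hx ▸ hα0))
  have hy0 : 1 + -y ≠ 0 := one_add_ne_zero_of_mobius_ne_zero (norm_pos_iff.mp (hy ▸ hβ0))
  have hxre := div_le_re_of_norm_mobius_le hx0 hα1 hx.le
  have hyre := div_le_re_of_norm_mobius_le hy0 hβ1 hy.le
  have hαβ : |α - β| ≤ (1 - α) + (1 - β) :=
    abs_sub_le_iff.mpr ⟨by linarith, by linarith⟩
  calc |α - β| / 2 ≤ (1 - α) / 2 + (1 - β) / 2 := by linarith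
    _ ≤ (1 - α) / (1 + α) + (1 - β) / (1 + β) := by gcongr <;> linarith
    _ ≤ x.re + (-y).re := add_le_add hxre hyre
    _ = (x - y).re := by simp [sub_eq_add_neg]
    _ ≤ ‖x - y‖ := Complex.re_le_norm _

/-- (Separation of Apollonian circles.)  If `x` lies on the boundary of `C^±_α`
(i.e. `|m(x)| = α` or `|m(x)| = 1/α`) and `y` lies on the boundary of `C^±_β`
(i.e. `|m(y)| = β` or `|m(y)| = 1/β`), with `α, β ∈ (0,1)`, then `|x − y| ≥ |α − β|/2`. -/
theorem apollonius_separation (α β : ℝ) (hα : α ∈ Set.Ioo (0 : ℝ) 1)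
    (hβ : β ∈ Set.Ioo (0 : ℝ) 1) (x y : ℂ)
    (hx : ‖mobius x‖ = α ∨ ‖mobius x‖ = 1 / α)
    (hy : ‖mobius y‖ = β ∨ ‖mobius y‖ = 1 / β) :
    |α - β| / 2 ≤ ‖x - y‖ := by
  obtain ⟨hα0, hα1⟩ := hα
  obtain ⟨hβ0, hβ1⟩ := hβ
  have hneg {z : ℂ} {γ : ℝ} (h : ‖mobius z‖ = 1 / γ) : ‖mobius (-z)‖ = γ := by
    rw [norm_mobius_neg, h, one_div, inv_inv]
  rcases hx with hx | hx <;> rcases hy with hy | hy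
  · exact apollonius_separation_same_side hα0 hα1.le hβ0 hβ1.le hx hy
  · exact apollonius_separation_opposite_sides hα0 hα1.le hβ0 hβ1.le hx (hneg hy)
  · rw [abs_sub_comm, norm_sub_rev]
    exact apollonius_separation_opposite_sides hβ0 hβ1.le hα0 hα1.le hy (hneg hx)
  · rw [norm_sub_rev, ← neg_sub_neg x y]
    exact apollonius_separation_same_side hα0 hα1.le hβ0 hβ1.le (hneg hx) (hneg hy)
end

section
/- Let t and c be real numbers with 0 < t < 1/800 and 0 < c < 1/2. Then for every natural number j with j ≥ lg(1/t) + 2·lg lg(1/t) + lg lg(1/c) + 1.62, one has (1−t)^{2^j} / t^{2j} < c. -/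
/-!
Write `r n = (1 - t) ^ 2 ^ n / t ^ (2 * n)`, `L = lg (1 / t)` and `M = lg (1 / c)`.
Since `(1 - t) ^ 2 ^ n ≤ exp (-t 2 ^ n)`, we get `r n < c` as soon as
`t 2 ^ n > log (1 / c) + 2 n log (1 / t) = log 2 · (M + 2 n L)`. At the least admissible `n`,
`t 2 ^ n = 2 ^ (n - L) ≥ 2 ^ 1.62 · L ^ 2 M ≥ 3 L ^ 2 M`, and this beats `log 2 · (M + 2 n L)`
because `n < L + 2 lg L + lg M + 2.62` and `L > 9`. Larger `n` follow from
`r (n + 1) = r n ^ 2 · t ^ (2 n - 2)`: once `r n < c ≤ 1`, the inequality propagates.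
-/

open Real

noncomputable def newtonRatio (t : ℝ) (j : ℕ) : ℝ := (1 - t) ^ (2 ^ j) / t ^ (2 * j)

lemma newtonRatio_nonneg (t : ℝ) {k : ℕ} (hk : k ≠ 0) : 0 ≤ newtonRatio t k := by
  have h2 : Even (2 ^ k) := (Nat.even_pow' hk).mpr even_two
  exact div_nonneg (h2.pow_nonneg _) (even_two_mul k |>.pow_nonneg _)

lemma newtonRatio_add_two (t : ℝ) (k : ℕ) :
    newtonRatio t (k + 2) = newtonRatio t (k + 1) ^ 2 * t ^ (2 * k) := by
  rcases eq_or_ne t 0 with rfl | ht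
  · simp [newtonRatio]
  · simp only [newtonRatio]
    field_simp
    ring

lemma newtonRatio_lt_of_le {t c : ℝ} (ht : |t| ≤ 1) (hc : c ≤ 1) {k j : ℕ} (hk : k ≠ 0)
    (hkj : k ≤ j) (h : newtonRatio t k < c) : newtonRatio t j < c := by
  induction j, hkj using Nat.le_induction with
  | base => exact h
  | succ m hkm ih =>
    obtain ⟨m, rfl⟩ := Nat.exists_eq_add_of_le' (Nat.pos_of_ne_zero hk |>.trans_le hkm)
    have h0 := newtonRatio_nonneg t (Nat.succ_ne_zero m)
    have htpow : t ^ (2 * m) ≤ 1 := by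
      rw [← (even_two_mul m).pow_abs]; exact pow_le_one₀ (abs_nonneg t) ht
    calc newtonRatio t (m + 2) = newtonRatio t (m + 1) ^ 2 * t ^ (2 * m) :=
          newtonRatio_add_two t m
      _ ≤ newtonRatio t (m + 1) ^ 2 :=
          mul_le_of_le_one_right (sq_nonneg _) htpow
      _ < c := by nlinarith

lemma one_sub_pow_le_exp_neg (t : ℝ) (ht : t ≤ 1) (m : ℕ) :
    (1 - t) ^ m ≤ exp (-(t * m)) := by
  calc (1 - t) ^ m ≤ exp (-t) ^ m :=
        pow_le_pow_left₀ (sub_nonneg.mpr ht) (one_sub_le_exp_neg t) m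
    _ = exp (-(t * m)) := by rw [← exp_nat_mul]; ring_nf

lemma newtonRatio_lt_of_log_lt {t c : ℝ} (ht : 0 < t) (ht' : t ≤ 1) (hc : 0 < c) {n : ℕ}
    (h : log (1 / c) + 2 * n * log (1 / t) < t * 2 ^ n) : newtonRatio t n < c := by
  have htn : 0 < t ^ (2 * n) := by positivity
  have hexp : exp (-(log (1 / c) + 2 * n * log (1 / t))) = c * t ^ (2 * n) := by
    rw [← exp_log (mul_pos hc htn), log_mul hc.ne' htn.ne', log_pow, one_div, one_div, log_inv,
      log_inv]
    push_cast
    ring_nf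
  rw [newtonRatio, div_lt_iff₀ htn, ← hexp]
  calc (1 - t) ^ (2 ^ n) ≤ exp (-(t * ((2 ^ n : ℕ) : ℝ))) := one_sub_pow_le_exp_neg t ht' _
    _ < exp (-(log (1 / c) + 2 * n * log (1 / t))) := by
      rw [exp_lt_exp]; push_cast; linarith

lemma three_le_two_rpow : (3 : ℝ) ≤ 2 ^ (1.62 : ℝ) := by
  have h85 : (3 : ℝ) ≤ 2 ^ (8 / 5 : ℝ) := by
    refine (pow_le_pow_iff_left₀ (by norm_num) (by positivity) (by norm_num : 5 ≠ 0)).mp ?_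
    rw [← rpow_natCast (2 ^ (8 / 5 : ℝ)) 5, ← rpow_mul (by norm_num)]
    norm_num
  exact h85.trans (rpow_le_rpow_of_exponent_le (by norm_num) (by norm_num))

lemma log_le_div_sub_one_add_log {a x : ℝ} (ha : 0 < a) (hx : 0 < x) :
    log x ≤ x / a - 1 + log a := by
  have h := log_le_sub_one_of_pos (div_pos hx ha)
  rw [log_div hx.ne' ha.ne'] at h
  linarith

lemma three_mul_sq_mul_le_mul_two_pow {t M : ℝ} (ht : 0 < t) (hL : 0 < logb 2 (1 / t))
    (hM : 0 < M) {n : ℕ}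
    (hn : logb 2 (1 / t) + 2 * logb 2 (logb 2 (1 / t)) + logb 2 M + 1.62 ≤ n) :
    3 * logb 2 (1 / t) ^ 2 * M ≤ t * 2 ^ n := by
  set L := logb 2 (1 / t)
  have h2L : (2 : ℝ) ^ L = 1 / t := rpow_logb two_pos (by norm_num) (by positivity)
  calc 3 * L ^ 2 * M ≤ L ^ 2 * M * 2 ^ (1.62 : ℝ) := by
        nlinarith [three_le_two_rpow, mul_pos (pow_pos hL 2) hM]
    _ = 2 ^ (logb 2 L + logb 2 L + logb 2 M + 1.62) := by
        rw [rpow_add two_pos, rpow_add two_pos, rpow_add two_pos,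
          rpow_logb two_pos (by norm_num) hL, rpow_logb two_pos (by norm_num) hM]
        ring
    _ ≤ 2 ^ ((n : ℝ) - L) := rpow_le_rpow_of_exponent_le one_le_two (by linarith)
    _ = t * 2 ^ n := by
        rw [rpow_sub two_pos, h2L, rpow_natCast]
        field_simp

lemma log_two_mul_add_lt_three_mul_sq_mul {L M n : ℝ} (hL : 9 < L) (hM : 1 < M)
    (hn : n < L + 2 * logb 2 L + logb 2 M + 2.62) :
    log 2 * (M + 2 * n * L) < 3 * L ^ 2 * M := by
  have hlog2 : 0 < log 2 := log_pos one_lt_two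
  have hlog2' : log 2 < 0.6932 := by linarith [log_two_lt_d9]
  have hlogL : log L ≤ L / 8 - 1 + 3 * log 2 := by
    have h8 : log 8 = 3 * log 2 := by
      rw [show (8 : ℝ) = 2 ^ 3 by norm_num, log_pow, Nat.cast_ofNat]
    linarith [log_le_div_sub_one_add_log (by norm_num : (0 : ℝ) < 8) (by linarith : 0 < L)]
  have hlogM : log M ≤ M - 1 := log_le_sub_one_of_pos (by linarith)
  have hn' : log 2 * n < log 2 * (L + 8.62) + L / 4 + M - 3 := by
    have h := mul_lt_mul_of_pos_left hn hlog2
    have e : log 2 * (L + 2 * logb 2 L + logb 2 M + 2.62)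
        = log 2 * (L + 2.62) + 2 * log L + log M := by
      simp only [logb]; field_simp; ring
    linarith
  -- with `log 2 < 0.6932` the gap is about `(M - 1)(3L² - 2L - 0.7) + 1.11 L² - 7.96 L - 0.7`
  nlinarith [mul_lt_mul_of_pos_left hn' (by linarith : (0 : ℝ) < 2 * L),
    mul_le_mul_of_nonneg_right hlog2'.le (by nlinarith : (0 : ℝ) ≤ M + 2 * L * (L + 8.62)),
    mul_nonneg (sub_nonneg.2 hM.le) (sub_nonneg.2 hL.le),
    mul_nonneg (mul_nonneg (sub_nonneg.2 hM.le) (sub_nonneg.2 hL.le)) (sub_nonneg.2 hL.le)]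

/-- Let `0 < t < 1/800` and `0 < c < 1/2`.  Then for every natural number `j` with
`j ≥ lg(1/t) + 2·lg lg(1/t) + lg lg(1/c) + 1.62` (where `lg` is the base-2 logarithm),
one has `(1−t)^{2^j} / t^{2j} < c`. -/
theorem newton_iteration_count (t c : ℝ) (ht : 0 < t) (ht' : t < 1 / 800)
    (hc : 0 < c) (hc' : c < 1 / 2) (j : ℕ)
    (hj : Real.logb 2 (1 / t) + 2 * Real.logb 2 (Real.logb 2 (1 / t)) +
        Real.logb 2 (Real.logb 2 (1 / c)) + 1.62 ≤ (j : ℝ)) :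
    (1 - t) ^ (2 ^ j) / t ^ (2 * j) < c := by
  set L := logb 2 (1 / t) with hLdef
  set M := logb 2 (1 / c) with hMdef
  have hL : 9 < L := by
    rw [lt_logb_iff_rpow_lt one_lt_two (by positivity), lt_div_iff₀ ht]
    norm_num
    linarith
  have hM : 1 < M := by
    rw [lt_logb_iff_rpow_lt one_lt_two (by positivity), lt_div_iff₀ hc]
    norm_num
    linarith
  set B := L + 2 * logb 2 L + logb 2 M + 1.62 with hBdef
  have hB : 0 < B := by
    linarith [logb_nonneg one_lt_two (by linarith : 1 ≤ L), logb_nonneg one_lt_two hM.le, hBdef]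
  have hlog : log (1 / c) + 2 * ⌈B⌉₊ * log (1 / t) < t * 2 ^ ⌈B⌉₊ :=
    calc log (1 / c) + 2 * ⌈B⌉₊ * log (1 / t) = log 2 * (M + 2 * ⌈B⌉₊ * L) := by
          simp only [hLdef, hMdef, logb]; field_simp
      _ < 3 * L ^ 2 * M := log_two_mul_add_lt_three_mul_sq_mul hL hM
          (by linarith [Nat.ceil_lt_add_one hB.le, hBdef])
      _ ≤ t * 2 ^ ⌈B⌉₊ :=
          three_mul_sq_mul_le_mul_two_pow ht (by linarith) (by linarith) (Nat.le_ceil B)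
  exact newtonRatio_lt_of_le (abs_le.mpr ⟨by linarith, by linarith⟩) (by linarith)
    (Nat.ceil_pos.mpr hB).ne' (Nat.ceil_le.mpr hj)
    (newtonRatio_lt_of_log_lt ht (by linarith) hc hlog)
end
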